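/- arXiv:2602.13068 — 2 statements merged into one kernel-verified Lean document; each statement's English description precedes it below -/
import Mathlib

section
/- Consistency of the average discrete gradient: if A : ℝᵐ → ℝ is continuously differentiable and its gradient ∇A is Lipschitz continuous with constant L ≥ 0, then for all x, y ∈ ℝᵐ, ‖∇̄A(x,y) − ∇A((x+y)/2)‖ ≤ (L/4) ‖y − x‖. -/
open scoped RealInnerProductSpace

/-- The average discrete gradient `∇̄A(x,y) = ∫₀¹ ∇A((1−t)x + t y) dt`. -/
noncomputable def avgDG {m : ℕ} (A : EuclideanSpace ℝ (Fin m) → ℝ)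
    (x y : EuclideanSpace ℝ (Fin m)) : EuclideanSpace ℝ (Fin m) :=
  ∫ t in (0:ℝ)..1, gradient A ((1 - t) • x + t • y)

lemma integral_abs_sub_half : ∫ t in (0:ℝ)..1, |t - 1/2| = 1/4 := by
  have h1 : ∫ t in (0:ℝ)..(1/2:ℝ), |t - 1/2| = ∫ t in (0:ℝ)..(1/2:ℝ), (1/2 - t) := by
    apply intervalIntegral.integral_congr
    intro t ht
    rw [Set.uIcc_of_le (by norm_num)] at ht
    show |t - 1/2| = 1/2 - t
    rw [abs_of_nonpos (by linarith [ht.2])]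
    ring
  have h2 : ∫ t in (1/2:ℝ)..(1:ℝ), |t - 1/2| = ∫ t in (1/2:ℝ)..(1:ℝ), (t - 1/2) := by
    apply intervalIntegral.integral_congr
    intro t ht
    rw [Set.uIcc_of_le (by norm_num)] at ht
    show |t - 1/2| = t - 1/2
    rw [abs_of_nonneg (by linarith [ht.1])]
  have hadd := intervalIntegral.integral_add_adjacent_intervals
    (μ := MeasureTheory.volume) (a := (0:ℝ)) (b := (1/2:ℝ)) (c := (1:ℝ)) (f := fun t => |t - 1/2|)
    ((continuous_abs.comp (by continuity)).intervalIntegrable _ _)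
    ((continuous_abs.comp (by continuity)).intervalIntegrable _ _)
  rw [← hadd, h1, h2]
  rw [intervalIntegral.integral_sub (intervalIntegrable_const (μ := MeasureTheory.volume)) (intervalIntegral.intervalIntegrable_id),
      intervalIntegral.integral_sub (intervalIntegral.intervalIntegrable_id) (intervalIntegrable_const (μ := MeasureTheory.volume))]
  simp [integral_id]
  norm_num

/-- Consistency of the average discrete gradient: if `∇A` is `L`-Lipschitz then
`‖∇̄A(x,y) − ∇A((x+y)/2)‖ ≤ (L/4)‖y − x‖`. -/
theorem avgDG_consistency (m : ℕ) (A : EuclideanSpace ℝ (Fin m) → ℝ)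
    (hA : ContDiff ℝ 1 A) (L : ℝ) (hL : 0 ≤ L)
    (hLip : ∀ a b : EuclideanSpace ℝ (Fin m),
      ‖gradient A a - gradient A b‖ ≤ L * ‖a - b‖)
    (x y : EuclideanSpace ℝ (Fin m)) :
    ‖avgDG A x y - gradient A ((1 / 2 : ℝ) • (x + y))‖ ≤ L / 4 * ‖y - x‖ := by
  set g := gradient A with hg
  set c := g ((1 / 2 : ℝ) • (x + y)) with hc
  have hgcont : Continuous g := by
    rw [hg]
    have : Continuous (fderiv ℝ A) := hA.continuous_fderiv one_ne_zero
    exact (InnerProductSpace.toDual ℝ _).symm.continuous.comp this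
  have hpath : Continuous (fun t : ℝ => (1 - t) • x + t • y) := by continuity
  have hfc : Continuous (fun t : ℝ => g ((1 - t) • x + t • y)) := hgcont.comp hpath
  have hint : IntervalIntegrable (fun t : ℝ => g ((1 - t) • x + t • y)) MeasureTheory.volume 0 1 :=
    hfc.intervalIntegrable 0 1
  have hcint : IntervalIntegrable (fun _ : ℝ => c) MeasureTheory.volume 0 1 :=
    intervalIntegrable_const
  have hsplit : avgDG A x y - c = ∫ t in (0:ℝ)..1, (g ((1 - t) • x + t • y) - c) := by
    rw [intervalIntegral.integral_sub hint hcint]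
    simp [avgDG, hg]
  rw [hsplit]
  have hbound : ∀ t ∈ Set.uIcc (0:ℝ) 1,
      ‖g ((1 - t) • x + t • y) - c‖ ≤ L * |t - 1/2| * ‖y - x‖ := by
    intro t _
    have := hLip ((1 - t) • x + t • y) ((1 / 2 : ℝ) • (x + y))
    have hdiff : ((1 - t) • x + t • y) - (1 / 2 : ℝ) • (x + y) = (t - 1/2) • (y - x) := by
      module
    rw [hdiff, norm_smul, Real.norm_eq_abs] at this
    calc ‖g ((1 - t) • x + t • y) - c‖ ≤ L * (|t - 1/2| * ‖y - x‖) := this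
      _ = L * |t - 1/2| * ‖y - x‖ := by ring
  have habs : IntervalIntegrable (fun t : ℝ => L * |t - 1/2| * ‖y - x‖)
      MeasureTheory.volume 0 1 := by
    apply Continuous.intervalIntegrable
    continuity
  have key : ‖∫ t in (0:ℝ)..1, (g ((1 - t) • x + t • y) - c)‖
      ≤ ∫ t in (0:ℝ)..1, L * |t - 1/2| * ‖y - x‖ := by
    have hae : ∀ᵐ t ∂MeasureTheory.volume.restrict (Set.uIoc (0:ℝ) 1),
        ‖g ((1 - t) • x + t • y) - c‖ ≤ L * |t - 1/2| * ‖y - x‖ := by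
      apply MeasureTheory.ae_restrict_of_forall_mem measurableSet_uIoc
      intro t ht
      exact hbound t (Set.uIoc_subset_uIcc ht)
    have h1 := intervalIntegral.norm_integral_le_abs_of_norm_le hae habs
    refine h1.trans (le_of_eq ?_)
    apply abs_of_nonneg
    apply intervalIntegral.integral_nonneg (by norm_num)
    intro u _
    positivity
  refine key.trans ?_
  have : ∫ t in (0:ℝ)..1, L * |t - 1/2| * ‖y - x‖
      = (L * ‖y - x‖) * ∫ t in (0:ℝ)..1, |t - 1/2| := by
    rw [← intervalIntegral.integral_const_mul]
    apply intervalIntegral.integral_congr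
    intro t _
    ring
  rw [this, integral_abs_sub_half]
  ring_nf
  rfl
end

section
/- Kinetic energy is an invariant of the finite-dimensional metric bracket: define K(V) = (1/2) Σ_{p=1}^N m w_p ‖v_p‖². Then Γ(K, p, p̄) = v_p − v_p̄, and since v_p − v_p̄ is a null eigenvector of the symmetric matrix Q(v_p − v_p̄), one has (K, G)_h = 0 for every continuously differentiable G : (ℝ³)^N → ℝ. -/
open Matrix
open scoped RealInnerProductSpace

/-- The Landau collision kernel `Q(ξ) = (1/‖ξ‖)(I − ξξᵀ/‖ξ‖²)` on ℝ³. -/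
noncomputable def landauQ (ξ : EuclideanSpace ℝ (Fin 3)) : Matrix (Fin 3) (Fin 3) ℝ :=
  ‖ξ‖⁻¹ • ((1 : Matrix (Fin 3) (Fin 3) ℝ) - (‖ξ‖ ^ 2)⁻¹ • Matrix.vecMulVec ξ ξ)

/-- Partial gradient of `F : (ℝ³)^N → ℝ` with respect to the velocity `v_p`. -/
noncomputable def gradVp {N : ℕ} (F : (Fin N → EuclideanSpace ℝ (Fin 3)) → ℝ)
    (V : Fin N → EuclideanSpace ℝ (Fin 3)) (p : Fin N) : EuclideanSpace ℝ (Fin 3) :=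
  gradient (fun ξ => F (Function.update V p ξ)) (V p)

/-- `Γ(F,p,p̄) = (1/(m w_p)) ∇_{v_p}F − (1/(m w_p̄)) ∇_{v_p̄}F`. -/
noncomputable def mGamma {N : ℕ} (m : ℝ) (w : Fin N → ℝ)
    (F : (Fin N → EuclideanSpace ℝ (Fin 3)) → ℝ)
    (V : Fin N → EuclideanSpace ℝ (Fin 3)) (p q : Fin N) : EuclideanSpace ℝ (Fin 3) :=
  (1 / (m * w p)) • gradVp F V p - (1 / (m * w q)) • gradVp F V q

/-- The finite-dimensional metric bracket
`(F,G)_h = ½ Σ_{p,p̄} Γ(F,p,p̄)ᵀ W(p,p̄) Γ(G,p,p̄)` with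
`W(p,p̄) = ν w_p w_p̄ 𝟙(p,p̄) Q(v_p − v_p̄)`. -/
noncomputable def mBracket {N : ℕ} (m ν : ℝ) (w : Fin N → ℝ) (ind : Fin N → Fin N → ℝ)
    (F G : (Fin N → EuclideanSpace ℝ (Fin 3)) → ℝ)
    (V : Fin N → EuclideanSpace ℝ (Fin 3)) : ℝ :=
  (1 / 2) * ∑ p, ∑ q, (ν * w p * w q * ind p q) *
    (mGamma m w F V p q ⬝ᵥ (landauQ (V p - V q)).mulVec (mGamma m w G V p q))

lemma euclid_sum_sq (ξ : EuclideanSpace ℝ (Fin 3)) :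
    ∑ i, ξ i * ξ i = ‖ξ‖ ^ 2 := by
  rw [← real_inner_self_eq_norm_sq]
  simp only [PiLp.inner_apply, RCLike.inner_apply, conj_trivial]

lemma vecMul_landauQ (ξ : EuclideanSpace ℝ (Fin 3)) (hξ : ξ ≠ 0) :
    Matrix.vecMul (ξ : Fin 3 → ℝ)
      (‖ξ‖⁻¹ • ((1 : Matrix (Fin 3) (Fin 3) ℝ) - (‖ξ‖ ^ 2)⁻¹ • Matrix.vecMulVec ξ ξ)) = 0 := by
  have hn : (‖ξ‖ : ℝ) ^ 2 ≠ 0 := by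
    have := norm_ne_zero_iff.mpr hξ; positivity
  funext j
  simp only [Matrix.vecMul, dotProduct, Matrix.smul_apply, Matrix.sub_apply,
    Matrix.one_apply, Matrix.vecMulVec_apply, smul_eq_mul, Pi.zero_apply, mul_sub, mul_ite,
    mul_one, mul_zero, Finset.sum_sub_distrib, Finset.sum_ite_eq']
  have : ∑ i, ξ i * (‖ξ‖⁻¹ * ((‖ξ‖ ^ 2)⁻¹ * (ξ i * ξ j)))
      = ‖ξ‖⁻¹ * ((‖ξ‖ ^ 2)⁻¹ * ((∑ i, ξ i * ξ i) * ξ j)) := by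
    rw [Finset.sum_mul, Finset.mul_sum, Finset.mul_sum]
    exact Finset.sum_congr rfl fun i _ => by ring
  rw [this, euclid_sum_sq, inv_mul_cancel_left₀ hn]
  simp [mul_comm]

noncomputable def kinE {N : ℕ} (m : ℝ) (w : Fin N → ℝ) :
    (Fin N → EuclideanSpace ℝ (Fin 3)) → ℝ :=
  fun U => (1 / 2) * ∑ p', m * w p' * ‖U p'‖ ^ 2

lemma gradVp_kinE {N : ℕ} (m : ℝ) (w : Fin N → ℝ)
    (V : Fin N → EuclideanSpace ℝ (Fin 3)) (p : Fin N) :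
    gradVp (kinE m w) V p = (m * w p) • V p := by
  set C : ℝ := ∑ p' ∈ Finset.univ.erase p, m * w p' * ‖V p'‖ ^ 2 with hC
  have hfun : (fun ξ : EuclideanSpace ℝ (Fin 3) => kinE m w (Function.update V p ξ))
      = fun ξ => (1 / 2) * (m * w p * ‖ξ‖ ^ 2 + C) := by
    funext ξ
    unfold kinE
    congr 1
    rw [← Finset.add_sum_erase _ _ (Finset.mem_univ p)]
    congr 1
    · simp
    · exact Finset.sum_congr rfl fun q hq => by
        rw [Function.update_of_ne (Finset.ne_of_mem_erase hq)]
  have hgrad : HasGradientAt (fun ξ : EuclideanSpace ℝ (Fin 3) =>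
      (1 / 2) * (m * w p * ‖ξ‖ ^ 2 + C)) ((m * w p) • V p) (V p) := by
    rw [hasGradientAt_iff_hasFDerivAt]
    have h1 := (hasStrictFDerivAt_norm_sq (V p)).hasFDerivAt
    have h4 := ((h1.const_mul (m * w p)).add_const C).const_mul (1 / 2)
    convert h4 using 1
    · rfl
    ext y
    simp [InnerProductSpace.toDual_apply_apply, real_inner_smul_left, innerSL_apply_apply]
    ring
  rw [gradVp, hfun, hgrad.gradient]

lemma mGamma_kinE {N : ℕ} (m : ℝ) (hm : 0 < m) (w : Fin N → ℝ) (hw : ∀ p, 0 < w p)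
    (V : Fin N → EuclideanSpace ℝ (Fin 3)) (p q : Fin N) :
    mGamma m w (kinE m w) V p q = V p - V q := by
  rw [mGamma, gradVp_kinE, gradVp_kinE, smul_smul, smul_smul]
  rw [one_div, inv_mul_cancel₀ (mul_pos hm (hw p)).ne', one_div,
    inv_mul_cancel₀ (mul_pos hm (hw q)).ne', one_smul, one_smul]


/-- Kinetic energy is an invariant of the finite-dimensional metric bracket: for
`K(V) = ½ Σ_p m w_p ‖v_p‖²`, one has `Γ(K,p,p̄) = v_p − v_p̄`, and `(K,G)_h = 0`
for every `C¹` function `G`. -/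
theorem mBracket_kineticEnergy_invariant (N : ℕ) (hN : 1 ≤ N) (m : ℝ) (hm : 0 < m)
    (w : Fin N → ℝ) (hw : ∀ p, 0 < w p) (ν : ℝ) (hν : 0 ≤ ν)
    (ind : Fin N → Fin N → ℝ) (hind01 : ∀ p q, ind p q = 0 ∨ ind p q = 1)
    (hindsymm : ∀ p q, ind p q = ind q p) (hinddiag : ∀ p, ind p p = 0)
    (V : Fin N → EuclideanSpace ℝ (Fin 3))
    (hV : ∀ p q, ind p q = 1 → V p ≠ V q) :
    (∀ p q, mGamma m w (fun U => (1 / 2) * ∑ p', m * w p' * ‖U p'‖ ^ 2) V p q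
        = V p - V q) ∧
    (∀ G : (Fin N → EuclideanSpace ℝ (Fin 3)) → ℝ, ContDiff ℝ 1 G →
      mBracket m ν w ind (fun U => (1 / 2) * ∑ p', m * w p' * ‖U p'‖ ^ 2) G V = 0) := by
  constructor
  · intro p q
    exact mGamma_kinE m hm w hw V p q
  · intro G hG
    rw [mBracket]
    have hterm : ∀ p q, (ν * w p * w q * ind p q) *
        (mGamma m w (fun U => (1 / 2) * ∑ p', m * w p' * ‖U p'‖ ^ 2) V p q ⬝ᵥ
          (landauQ (V p - V q)).mulVec (mGamma m w G V p q)) = 0 := by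
      intro p q
      rcases hind01 p q with h0 | h1
      · rw [h0, mul_zero, zero_mul]
      · have hne : V p - V q ≠ 0 := sub_ne_zero.mpr (hV p q h1)
        have hK : mGamma m w (fun U => (1 / 2) * ∑ p', m * w p' * ‖U p'‖ ^ 2) V p q
            = V p - V q := mGamma_kinE m hm w hw V p q
        rw [hK, Matrix.dotProduct_mulVec, landauQ, vecMul_landauQ _ hne,
          zero_dotProduct, mul_zero]
    simp only [hterm, Finset.sum_const_zero, mul_zero]
end
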